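/- arXiv:0910.0188 — 2 statements merged into one kernel-verified Lean document; each statement's English description precedes it below -/
import Mathlib

section
/- For every positive real number u and every positive integer m, the integral over x from 0 to infinity of x^m / ((x+1)^(m+1) (x u + 1)) dx equals ((-1)^m / (u-1)^(m+1)) · (log u - ∑_{j=1}^m (-1)^(j+1) (u-1)^j / j), provided u ≠ 1. -/
/-!
The substitution `x = z / (1 - z)` turns the integral into `J m = ∫₀¹ zᵐ / (1 + a z) dz` with
`a = u - 1`. The identity `z^(m+1) = (zᵐ - zᵐ / (1 + a z)) / a` gives the recursion
`J (m + 1) = (1 / (m + 1) - J m) / a`, starting from `J 0 = log (1 + a) / a`, and the recursion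
is solved by the truncated logarithmic series.
-/

open MeasureTheory Set intervalIntegral

lemma image_div_one_sub_Ioo : (fun z : ℝ => z / (1 - z)) '' Ioo 0 1 = Ioi 0 := by
  ext y
  simp only [mem_image, mem_Ioo, mem_Ioi]
  constructor
  · rintro ⟨z, ⟨hz₀, hz₁⟩, rfl⟩
    exact div_pos hz₀ (by linarith)
  · intro hy
    refine ⟨y / (1 + y), ⟨by positivity, (div_lt_one (by linarith)).2 (by linarith)⟩, ?_⟩
    field_simp
    ring

lemma injOn_div_one_sub_Ioo : InjOn (fun z : ℝ => z / (1 - z)) (Ioo 0 1) := by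
  intro z₁ hz₁ z₂ hz₂ h
  have h₁ : 1 - z₁ ≠ 0 := by linarith [hz₁.2]
  have h₂ : 1 - z₂ ≠ 0 := by linarith [hz₂.2]
  rw [div_eq_div_iff h₁ h₂] at h
  linarith

lemma hasDerivAt_div_one_sub {z : ℝ} (hz : z ≠ 1) :
    HasDerivAt (fun z : ℝ => z / (1 - z)) ((1 - z) ^ 2)⁻¹ z := by
  have h : 1 - z ≠ 0 := sub_ne_zero.2 hz.symm
  refine ((hasDerivAt_id' z).div ((hasDerivAt_id' z).const_sub 1) h).congr_deriv ?_
  field_simp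
  ring

theorem integral_Ioi_eq_integral_Ioo_div_one_sub {E : Type*} [NormedAddCommGroup E]
    [NormedSpace ℝ E] (f : ℝ → E) :
    ∫ x in Ioi (0:ℝ), f x = ∫ z in Ioo (0:ℝ) 1, ((1 - z) ^ 2)⁻¹ • f (z / (1 - z)) := by
  rw [← image_div_one_sub_Ioo, integral_image_eq_integral_abs_deriv_smul measurableSet_Ioo
    (fun z hz => (hasDerivAt_div_one_sub hz.2.ne).hasDerivWithinAt) injOn_div_one_sub_Ioo]
  refine setIntegral_congr_fun measurableSet_Ioo fun z hz => ?_
  simp only [abs_of_pos (inv_pos.2 (pow_pos (sub_pos.2 hz.2) 2))]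

section OneAddMul

variable {a : ℝ}

lemma one_add_mul_pos (ha : -1 < a) {z : ℝ} (hz₀ : 0 ≤ z) (hz₁ : z ≤ 1) : 0 < 1 + a * z := by
  rcases le_or_gt 0 a with h | h <;> nlinarith

lemma intervalIntegrable_pow_div_one_add_mul (ha : -1 < a) (m : ℕ) :
    IntervalIntegrable (fun z => z ^ m / (1 + a * z)) volume 0 1 := by
  refine ContinuousOn.intervalIntegrable (ContinuousOn.div (by fun_prop) (by fun_prop) ?_)
  intro z hz
  rw [uIcc_of_le zero_le_one] at hz
  exact (one_add_mul_pos ha hz.1 hz.2).ne'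

lemma integral_inv_one_add_mul (ha : -1 < a) (ha₀ : a ≠ 0) :
    ∫ z in (0:ℝ)..1, (1 + a * z)⁻¹ = Real.log (1 + a) / a := by
  have hderiv : ∀ z ∈ uIcc (0:ℝ) 1,
      HasDerivAt (fun z => Real.log (1 + a * z) / a) (1 + a * z)⁻¹ z := by
    intro z hz
    rw [uIcc_of_le zero_le_one] at hz
    have hlog := (((hasDerivAt_id' z).const_mul a).const_add 1).log
      (one_add_mul_pos ha hz.1 hz.2).ne'
    refine (hlog.div_const a).congr_deriv ?_
    field_simp
  rw [integral_eq_sub_of_hasDerivAt hderiv]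
  · simp
  · simpa using intervalIntegrable_pow_div_one_add_mul ha 0

lemma integral_pow_succ_div_one_add_mul (ha : -1 < a) (ha₀ : a ≠ 0) (m : ℕ) :
    ∫ z in (0:ℝ)..1, z ^ (m + 1) / (1 + a * z) =
      (1 / (m + 1) - ∫ z in (0:ℝ)..1, z ^ m / (1 + a * z)) / a := by
  have hsplit : EqOn (fun z => z ^ (m + 1) / (1 + a * z))
      (fun z => (z ^ m - z ^ m / (1 + a * z)) / a) (uIcc 0 1) := by
    intro z hz
    rw [uIcc_of_le zero_le_one] at hz
    have := (one_add_mul_pos ha hz.1 hz.2).ne'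
    field_simp
    ring
  rw [integral_congr hsplit, intervalIntegral.integral_div,
    integral_sub (intervalIntegrable_pow m) (intervalIntegrable_pow_div_one_add_mul ha m),
    integral_pow]
  norm_num

lemma integral_pow_div_one_add_mul (ha : -1 < a) (ha₀ : a ≠ 0) (m : ℕ) :
    ∫ z in (0:ℝ)..1, z ^ m / (1 + a * z) =
      (-1) ^ m / a ^ (m + 1) *
        (Real.log (1 + a) - ∑ j ∈ Finset.Icc 1 m, (-1) ^ (j + 1) * a ^ j / (j : ℝ)) := by
  induction m with
  | zero => simpa [div_eq_inv_mul] using integral_inv_one_add_mul ha ha₀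
  | succ m ih =>
    have hsign : ((-1 : ℝ) ^ m) ^ 2 = 1 := by rw [← pow_mul, pow_mul', neg_one_sq, one_pow]
    rw [integral_pow_succ_div_one_add_mul ha ha₀, ih, Finset.sum_Icc_succ_top (by omega)]
    push_cast
    field_simp
    linear_combination -(a ^ 3 * a ^ (m * 2)) * hsign

end OneAddMul

lemma integrand_comp_div_one_sub {u z : ℝ} (m : ℕ) (hz : z ≠ 1) :
    ((1 - z) ^ 2)⁻¹ * ((z / (1 - z)) ^ m / ((z / (1 - z) + 1) ^ (m + 1) * (z / (1 - z) * u + 1))) =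
      z ^ m / (1 + (u - 1) * z) := by
  have h : 1 - z ≠ 0 := sub_ne_zero.2 hz.symm
  rw [show z / (1 - z) + 1 = (1 - z)⁻¹ by field_simp; ring,
    show z / (1 - z) * u + 1 = (1 + (u - 1) * z) / (1 - z) by field_simp; ring,
    div_pow, inv_pow, pow_succ]
  field_simp
  ring

theorem integral_modified_log_general (u : ℝ) (hu : 0 < u) (hu1 : u ≠ 1) (m : ℕ) :
    ∫ x in Set.Ioi (0:ℝ), x ^ m / ((x + 1) ^ (m + 1) * (x * u + 1)) =
      (-1) ^ m / (u - 1) ^ (m + 1) *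
        (Real.log u - ∑ j ∈ Finset.Icc 1 m, (-1) ^ (j + 1) * (u - 1) ^ j / (j : ℝ)) := by
  calc ∫ x in Ioi (0:ℝ), x ^ m / ((x + 1) ^ (m + 1) * (x * u + 1))
      = ∫ z in Ioo (0:ℝ) 1, z ^ m / (1 + (u - 1) * z) := by
        rw [integral_Ioi_eq_integral_Ioo_div_one_sub]
        exact setIntegral_congr_fun measurableSet_Ioo fun z hz =>
          integrand_comp_div_one_sub m hz.2.ne
    _ = ∫ z in (0:ℝ)..1, z ^ m / (1 + (u - 1) * z) := by
        rw [integral_of_le zero_le_one, integral_Ioc_eq_integral_Ioo]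
    _ = _ := by
        rw [integral_pow_div_one_add_mul (by linarith) (sub_ne_zero.2 hu1), add_sub_cancel]

theorem integral_modified_log (u : ℝ) (hu : 0 < u) (hu1 : u ≠ 1) (m : ℕ) (hm : 1 ≤ m) :
    ∫ x in Set.Ioi (0:ℝ), x ^ m / ((x + 1) ^ (m + 1) * (x * u + 1)) =
      (-1) ^ m / (u - 1) ^ (m + 1) *
        (Real.log u - ∑ j ∈ Finset.Icc 1 m, (-1) ^ (j + 1) * (u - 1) ^ j / (j : ℝ)) :=
  integral_modified_log_general u hu hu1 m
end

section
/- For all real s, 1/(e^s + 1) · e^{s/2} = ∫_{-∞}^{∞} e^{i t s} / (e^{π t} + e^{-π t}) dt. -/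
open Complex MeasureTheory Set

lemma cpow_pos_real {x : ℝ} (hx : 0 < x) (c : ℂ) :
    (x : ℂ) ^ c = Complex.exp (c * Real.log x) := by
  rw [Complex.cpow_def_of_ne_zero (by exact_mod_cast hx.ne'), Complex.ofReal_log hx.le]
  ring_nf

lemma beta_Ioi {a : ℂ} (ha : 0 < a.re) (ha' : a.re < 1) :
    ∫ x : ℝ in Ioi 0, (x : ℂ) ^ (a - 1) / (1 + (x : ℂ)) = ↑Real.pi / Complex.sin (↑Real.pi * a) := by
  have himg : (fun u : ℝ => u / (1 - u)) '' Ioo 0 1 = Ioi 0 := by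
    ext x
    constructor
    · rintro ⟨u, ⟨hu0, hu1⟩, rfl⟩
      exact div_pos hu0 (by linarith)
    · intro hx
      refine ⟨x / (1 + x), ⟨div_pos hx (by linarith [mem_Ioi.mp hx]), ?_⟩, ?_⟩
      · rw [div_lt_one (by linarith [mem_Ioi.mp hx])]; linarith [mem_Ioi.mp hx]
      · have h1 : (0:ℝ) < 1 + x := by linarith [mem_Ioi.mp hx]
        field_simp; ring
  have hderiv : ∀ u ∈ Ioo (0:ℝ) 1, HasDerivWithinAt (fun u : ℝ => u / (1 - u))
      (((1 - u) ^ 2)⁻¹) (Ioo 0 1) u := by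
    intro u ⟨hu0, hu1⟩
    have h1 : (1:ℝ) - u ≠ 0 := by linarith
    have := (hasDerivAt_id u).div ((hasDerivAt_id u).const_sub 1) h1
    convert this.hasDerivWithinAt using 1
    all_goals first | rfl | (simp only [id]; field_simp; ring) | (simp only [id]; field_simp)
  have hinj : InjOn (fun u : ℝ => u / (1 - u)) (Ioo 0 1) := by
    intro u ⟨hu0, hu1⟩ v ⟨hv0, hv1⟩ h
    have h1 : (1:ℝ) - u ≠ 0 := by linarith
    have h2 : (1:ℝ) - v ≠ 0 := by linarith
    field_simp at h
    linarith
  have key := integral_image_eq_integral_abs_deriv_smul measurableSet_Ioo hderiv hinj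
    (fun x : ℝ => (x : ℂ) ^ (a - 1) / (1 + (x : ℂ)))
  rw [himg] at key
  rw [key]
  have hptw : ∀ u ∈ Ioo (0:ℝ) 1,
      |((1 - u) ^ 2)⁻¹| • ((((u / (1 - u) : ℝ)) : ℂ) ^ (a - 1) / (1 + ((u / (1 - u) : ℝ) : ℂ)))
        = (u : ℂ) ^ (a - 1) * (1 - (u : ℂ)) ^ ((1 - a) - 1) := by
    intro u ⟨hu0, hu1⟩
    have h1 : (0:ℝ) < 1 - u := by linarith
    have hq : (0:ℝ) < u / (1 - u) := div_pos hu0 h1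
    rw [cpow_pos_real hq, cpow_pos_real hu0, Real.log_div hu0.ne' h1.ne']
    have h1u : ((1 - u : ℝ) : ℂ) = 1 - (u:ℂ) := by push_cast; ring
    rw [← h1u, cpow_pos_real h1]
    have hden : 1 + ((u / (1 - u) : ℝ) : ℂ) = ((1-u:ℝ))⁻¹ := by
      push_cast
      have hne : ((1:ℂ) - u) ≠ 0 := by exact_mod_cast h1.ne'
      field_simp; ring
    rw [hden]
    rw [abs_of_pos (by positivity), real_smul]
    push_cast
    have hE : (1 : ℂ) - (u:ℂ) = Complex.exp ((Real.log (1-u) : ℝ) : ℂ) := by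
      rw [← Complex.ofReal_exp, Real.exp_log h1]; push_cast; ring
    rw [hE]
    simp only [div_eq_mul_inv, inv_inv, ← Complex.exp_neg, ← Complex.exp_nat_mul,
      ← Complex.exp_add]
    congr 1
    push_cast
    ring
  calc ∫ u in Ioo (0:ℝ) 1, |((1 - u) ^ 2)⁻¹| •
        ((((u / (1 - u) : ℝ)) : ℂ) ^ (a - 1) / (1 + ((u / (1 - u) : ℝ) : ℂ)))
      = ∫ u in Ioo (0:ℝ) 1, (u : ℂ) ^ (a - 1) * (1 - (u : ℂ)) ^ ((1 - a) - 1) :=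
        setIntegral_congr_fun measurableSet_Ioo hptw
    _ = Complex.betaIntegral a (1 - a) := by
        rw [Complex.betaIntegral, intervalIntegral.integral_of_le zero_le_one,
          MeasureTheory.integral_Ioc_eq_integral_Ioo]
    _ = ↑Real.pi / Complex.sin (↑Real.pi * a) := by
        have hb := Complex.Gamma_mul_Gamma_eq_betaIntegral ha
          (by rw [Complex.sub_re, Complex.one_re]; linarith : 0 < (1 - a).re)
        rw [add_sub_cancel, Complex.Gamma_one, one_mul] at hb
        rw [← hb, Complex.Gamma_mul_Gamma_one_sub]

theorem fourier_sech_identity (s : ℝ) :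
    ((Real.exp (s / 2) / (Real.exp s + 1) : ℝ) : ℂ) =
      ∫ t : ℝ, Complex.exp (I * t * s) /
        ((Real.exp (Real.pi * t) : ℂ) + (Real.exp (-(Real.pi * t)) : ℂ)) := by
  have hπ : (0:ℝ) < Real.pi := Real.pi_pos
  set π : ℝ := Real.pi with hπdef
  set a : ℂ := 1/2 - ((s/(2*π) : ℝ) : ℂ) * I with ha_def
  have ha_re : a.re = 1/2 := by
    rw [ha_def]
    simp only [Complex.sub_re, Complex.mul_re, Complex.I_re, Complex.I_im, Complex.ofReal_re,
      Complex.ofReal_im, Complex.one_re, Complex.div_re]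
    norm_num
  have himg : (fun t : ℝ => Real.exp (-(2*π*t))) '' univ = Ioi 0 := by
    ext x
    simp only [image_univ, mem_range, mem_Ioi]
    constructor
    · rintro ⟨t, rfl⟩; exact Real.exp_pos _
    · intro hx
      exact ⟨-(Real.log x) / (2*π), by rw [← Real.exp_log hx]; congr 1; field_simp; rw [Real.log_exp]⟩
  have hderiv : ∀ t ∈ (univ : Set ℝ), HasDerivWithinAt (fun t : ℝ => Real.exp (-(2*π*t)))
      (-(2*π) * Real.exp (-(2*π*t))) univ t := by
    intro t _
    have h1 : HasDerivAt (fun t : ℝ => -(2*π*t)) (-(2*π)) t := by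
      simpa using ((hasDerivAt_id t).const_mul (-(2*π)))
    have := (Real.hasDerivAt_exp (-(2*π*t))).comp t h1
    convert this.hasDerivWithinAt using 1
    all_goals first | rfl | ring
  have hinj : InjOn (fun t : ℝ => Real.exp (-(2*π*t))) univ := by
    intro u _ v _ h
    have := Real.exp_injective h
    have h2 : (2*π) ≠ 0 := by positivity
    field_simp at this
    linarith
  have key := integral_image_eq_integral_abs_deriv_smul MeasurableSet.univ hderiv hinj
    (fun x : ℝ => (x : ℂ) ^ (a - 1) / (1 + (x : ℂ)))
  rw [himg, Measure.restrict_univ] at key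
  have hbeta := beta_Ioi (a := a) (by rw [ha_re]; norm_num) (by rw [ha_re]; norm_num)
  rw [key] at hbeta
  have hptw : ∀ t : ℝ, |(-(2*π) * Real.exp (-(2*π*t)))| •
      (((Real.exp (-(2*π*t)) : ℝ) : ℂ) ^ (a - 1) / (1 + ((Real.exp (-(2*π*t)) : ℝ) : ℂ)))
      = ((2*π : ℝ) : ℂ) * (Complex.exp (I * t * s) /
        ((Real.exp (π * t) : ℂ) + (Real.exp (-(π * t)) : ℂ))) := by
    intro t
    have habs : |(-(2*π) * Real.exp (-(2*π*t)))| = (2*π) * Real.exp (-(2*π*t)) := by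
      rw [abs_mul, abs_neg, abs_of_pos (by positivity), abs_of_pos (Real.exp_pos _)]
    rw [habs, cpow_pos_real (Real.exp_pos _) _, Real.log_exp]
    have hexp : (a - 1) * ((-(2*π*t) : ℝ) : ℂ) = ((π * t : ℝ) : ℂ) + I * t * s := by
      rw [ha_def]
      have h2 : ((2*(π:ℂ))) ≠ 0 := by
        simp only [ne_eq, mul_eq_zero]; push_neg
        exact ⟨two_ne_zero, by exact_mod_cast hπ.ne'⟩
      push_cast
      have hπ0 : (π:ℂ) ≠ 0 := by exact_mod_cast hπ.ne'
      field_simp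
      ring
    rw [hexp, Complex.exp_add, real_smul]
    have e1 : ((Real.exp (-(2*π*t)) : ℝ) : ℂ) = Complex.exp ((-(2*π*t) : ℝ) : ℂ) :=
      Complex.ofReal_exp _
    have e2 : ((Real.exp (π*t) : ℝ) : ℂ) = Complex.exp ((π*t : ℝ) : ℂ) := Complex.ofReal_exp _
    have e3 : ((Real.exp (-(π*t)) : ℝ) : ℂ) = Complex.exp ((-(π*t) : ℝ) : ℂ) :=
      Complex.ofReal_exp _
    rw [e1, e2, e3]
    have hd1 : 1 + Complex.exp ((-(2*π*t) : ℝ) : ℂ) ≠ 0 := by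
      rw [← e1]
      intro h
      have := congrArg Complex.re h
      simp only [Complex.add_re, Complex.one_re, Complex.ofReal_re, Complex.zero_re] at this
      linarith [Real.exp_pos (-(2*π*t))]
    have hd2 : Complex.exp ((π*t : ℝ) : ℂ) + Complex.exp ((-(π*t) : ℝ) : ℂ) ≠ 0 := by
      rw [← e2, ← e3]
      intro h
      have := congrArg Complex.re h
      simp only [Complex.add_re, Complex.ofReal_re, Complex.zero_re] at this
      linarith [Real.exp_pos (π*t), Real.exp_pos (-(π*t))]
    field_simp
    push_cast
    simp only [mul_add, add_mul, mul_assoc, ← Complex.exp_add]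
    ring_nf
    simp
  simp_rw [hptw] at hbeta
  rw [MeasureTheory.integral_const_mul] at hbeta
  have hsin : Complex.sin (↑Real.pi * a) = ((Real.cosh (s/2) : ℝ) : ℂ) := by
    have hpa : (↑Real.pi : ℂ) * a = ↑Real.pi/2 - ((s/2 : ℝ) : ℂ) * I := by
      rw [ha_def]
      have hπc : ((π:ℝ) : ℂ) ≠ 0 := by exact_mod_cast hπ.ne'
      push_cast
      field_simp
      ring
    rw [hpa, Complex.sin_pi_div_two_sub, Complex.cos_mul_I, Complex.ofReal_cosh]
  rw [hsin] at hbeta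
  have h2π : ((2*π : ℝ) : ℂ) ≠ 0 := by
    exact_mod_cast (by positivity : (2*π:ℝ) ≠ 0)
  have hint : (∫ t : ℝ, Complex.exp (I * t * s) /
      ((Real.exp (π * t) : ℂ) + (Real.exp (-(π * t)) : ℂ)))
      = ↑Real.pi / (((2*π : ℝ) : ℂ) * ((Real.cosh (s/2) : ℝ) : ℂ)) := by
    rw [div_mul_eq_div_div, div_right_comm, eq_div_iff h2π, mul_comm]
    exact hbeta
  rw [hint]
  have hreal : Real.exp (s/2) / (Real.exp s + 1) = Real.pi / (2*π * Real.cosh (s/2)) := by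
    rw [Real.cosh_eq]
    have hs2 : Real.exp s = Real.exp (s/2) * Real.exp (s/2) := by
      rw [← Real.exp_add]; ring_nf
    have he : (0:ℝ) < Real.exp (s/2) := Real.exp_pos _
    have hen : Real.exp (-(s/2)) = (Real.exp (s/2))⁻¹ := Real.exp_neg _
    rw [hs2, hen]
    have hden : Real.exp (s/2) * Real.exp (s/2) + 1 > 0 := by positivity
    field_simp
    ring
  rw [hreal]
  push_cast
  ring
end
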